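/- Let T = ℝ/(Lℤ) be the circle of perimeter L > 0 with normalized Haar probability measure ℓ, let U : T → [0,∞) be C² and non-constant, fix m ∈ (0,1/2), and let φ = φ_{m,2}, ψ = ψ_{m,2}. Fix β > 0, let c* satisfy ∫_T ψ(c* − βU) dℓ = 1, set μ = ψ(c* − βU) and μ_min = min_T μ, and define θ(r) = ∫_0^r √( ψ(s + φ'(μ_min)) ) ds. Then for every positive continuously differentiable probability density ρ on T, writing g = φ'(ρ) − φ'(μ), one has ∫_T | (φ'∘ρ)' − (φ'∘μ)' |² ρ dℓ ≥ ∫_T | (θ∘g)' |² dℓ. -/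

import Mathlib

open MeasureTheory Real Set Filter Topology
open scoped ENNReal NNReal

/-- `φ_m(r) = (r^m − 1 − m(r−1))/(m(m−1))`. -/
noncomputable def phim (m r : ℝ) : ℝ := (r ^ m - 1 - m * (r - 1)) / (m * (m - 1))

/-- The glued potential `φ_{m,2}`: `φ_m` on `[0,1]` and `(r−1)²/2` on `(1,∞)`. -/
noncomputable def phim2 (m r : ℝ) : ℝ := if r ≤ 1 then phim m r else (r - 1) ^ 2 / 2

/-- The derivative `φ'_{m,2}`. -/
noncomputable def dphim2 (m r : ℝ) : ℝ :=
  if r ≤ 1 then (r ^ (m - 1) - 1) / (m - 1) else r - 1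

/-- `ψ_{m,2}`, the inverse of `φ'_{m,2}`. -/
noncomputable def psim2 (m s : ℝ) : ℝ :=
  if s ≤ 0 then (1 + (m - 1) * s) ^ (1 / (m - 1)) else 1 + s

/-- `θ(r) = ∫_0^r √(ψ_{m,2}(s + b)) ds`, where `b = φ'_{m,2}(μ_min)`. -/
noncomputable def thetaFn (m b r : ℝ) : ℝ := ∫ s in (0:ℝ)..r, Real.sqrt (psim2 m (s + b))

section aux
variable {m : ℝ} (hm : m < 1)
include hm

lemma psim2_pos (s : ℝ) : 0 < psim2 m s := by
  unfold psim2
  split_ifs with h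
  · exact Real.rpow_pos_of_pos (by nlinarith) _
  · push_neg at h; linarith

lemma psim2_mono : Monotone (psim2 m) := by
  intro s t hst
  unfold psim2
  split_ifs with h1 h2 h2
  · exact Real.rpow_le_rpow_of_nonpos (by nlinarith) (by nlinarith)
      (by apply div_nonpos_of_nonneg_of_nonpos <;> linarith)
  · push_neg at h2
    calc (1 + (m-1)*s) ^ (1/(m-1)) ≤ 1 :=
          Real.rpow_le_one_of_one_le_of_nonpos (by nlinarith)
            (by apply div_nonpos_of_nonneg_of_nonpos <;> linarith)
      _ ≤ 1 + t := by linarith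
  · push_neg at h1; linarith
  · linarith

lemma psim2_dphim2 {r : ℝ} (hr : 0 < r) : psim2 m (dphim2 m r) = r := by
  have hne : m - 1 ≠ 0 := by linarith
  unfold dphim2
  split_ifs with h
  · have h1 : (1:ℝ) ≤ r ^ (m-1) :=
      Real.one_le_rpow_of_pos_of_le_one_of_nonpos hr h (by linarith)
    have hd : (r ^ (m-1) - 1) / (m-1) ≤ 0 :=
      div_nonpos_of_nonneg_of_nonpos (by linarith) (by linarith)
    rw [psim2, if_pos hd]
    have : 1 + (m-1) * ((r ^ (m-1) - 1) / (m-1)) = r ^ (m-1) := by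
      field_simp
      ring
    rw [this, one_div, Real.rpow_rpow_inv hr.le hne]
  · push_neg at h
    rw [psim2, if_neg (by push_neg; linarith)]
    ring

lemma dphim2_mono {a b : ℝ} (ha : 0 < a) (hab : a ≤ b) : dphim2 m a ≤ dphim2 m b := by
  unfold dphim2
  split_ifs with h1 h2 h2
  · have h3 := Real.rpow_le_rpow_of_nonpos ha hab (z := m - 1) (by linarith)
    have h4 : ((a ^ (m-1) - 1) - (b ^ (m-1) - 1)) / (m-1) ≤ 0 :=
      div_nonpos_of_nonneg_of_nonpos (by linarith) (by linarith)
    rw [sub_div] at h4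
    linarith
  · push_neg at h2
    have h1' : (1:ℝ) ≤ a ^ (m-1) :=
      Real.one_le_rpow_of_pos_of_le_one_of_nonpos ha h1 (by linarith)
    have : (a ^ (m-1) - 1) / (m-1) ≤ 0 :=
      div_nonpos_of_nonneg_of_nonpos (by linarith) (by linarith)
    linarith
  · push_neg at h1; linarith
  · linarith

lemma continuous_psim2 : Continuous (psim2 m) := by
  have key : psim2 m = fun s =>
      if s ≤ 0 then (max (1 + (m-1)*s) 1) ^ (1/(m-1)) else 1 + s := by
    funext s
    unfold psim2
    split_ifs with h
    · rw [max_eq_left (by nlinarith)]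
    · rfl
  rw [key]
  apply Continuous.if_le
  · exact ((continuous_const.add (continuous_const.mul continuous_id)).max
      continuous_const).rpow_const (fun s => Or.inl (by positivity))
  · exact continuous_const.add continuous_id
  · exact continuous_id
  · exact continuous_const
  · intro s hs
    subst hs
    simp

end aux

noncomputable def Dphi (m r : ℝ) : ℝ := max (r ^ (m - 2)) 1

noncomputable def Dpsi (m s : ℝ) : ℝ :=
  min ((max (1 + (m - 1) * s) 1) ^ (1 / (m - 1) - 1)) 1

section deriv
variable {m : ℝ} (hm : m < 1)
include hm

lemma hasDerivAt_dphim2 {r : ℝ} (hr : 0 < r) : HasDerivAt (dphim2 m) (Dphi m r) r := by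
  have hne : m - 1 ≠ 0 := by intro h; linarith [sub_eq_zero.mp h]
  have hf : ∀ t : ℝ, t ≠ 0 →
      HasDerivAt (fun u : ℝ => (u ^ (m-1) - 1)/(m-1)) (t ^ (m-2)) t := by
    intro t ht
    have h := ((Real.hasDerivAt_rpow_const (x := t) (p := m-1) (Or.inl ht)).sub_const 1).div_const (m-1)
    have he : m - 1 - 1 = m - 2 := by ring
    rw [he] at h
    have h2 : (m-1) * t ^ (m-2) / (m-1) = t ^ (m-2) := by field_simp
    rwa [h2] at h
  rcases lt_trichotomy r 1 with h | h | h
  · have hD : Dphi m r = r ^ (m-2) :=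
      max_eq_left (Real.one_le_rpow_of_pos_of_le_one_of_nonpos hr h.le (by linarith))
    rw [hD]
    refine (hf r hr.ne').congr_of_eventuallyEq ?_
    filter_upwards [Iio_mem_nhds h] with t ht
    rw [dphim2, if_pos ht.le]
  · subst h
    have hD : Dphi m 1 = 1 := by simp [Dphi, Real.one_rpow]
    rw [hD]
    have h1 : (1:ℝ) ^ (m-2) = 1 := Real.one_rpow _
    have hleft : HasDerivWithinAt (dphim2 m) 1 (Iic 1) 1 := by
      have := (hf 1 one_ne_zero).hasDerivWithinAt (s := Iic 1)
      rw [h1] at this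
      exact this.congr (fun t ht => by rw [dphim2, if_pos (mem_Iic.mp ht)])
        (by rw [dphim2, if_pos le_rfl])
    have hright : HasDerivWithinAt (dphim2 m) 1 (Ici 1) 1 := by
      have hbase : HasDerivWithinAt (fun t : ℝ => t - 1) 1 (Ici 1) 1 :=
        ((hasDerivAt_id (1:ℝ)).sub_const 1).hasDerivWithinAt
      refine hbase.congr (fun t ht => ?_) ?_
      · rcases eq_or_lt_of_le (mem_Ici.mp ht) with h' | h'
        · rw [dphim2, if_pos h'.symm.le, ← h', Real.one_rpow]; ring
        · rw [dphim2, if_neg (not_le.mpr h')]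
      · rw [dphim2, if_pos le_rfl, Real.one_rpow]; ring
    have := hleft.union hright
    rw [Iic_union_Ici] at this
    exact hasDerivWithinAt_univ.mp this
  · have hD : Dphi m r = 1 :=
      max_eq_right (Real.rpow_le_one_of_one_le_of_nonpos h.le (by linarith))
    rw [hD]
    refine (((hasDerivAt_id r).sub_const 1)).congr_of_eventuallyEq ?_
    filter_upwards [Ioi_mem_nhds h] with t ht
    rw [dphim2, if_neg (not_le.mpr (mem_Ioi.mp ht))]
    rfl

lemma hasDerivAt_psim2 (s : ℝ) : HasDerivAt (psim2 m) (Dpsi m s) s := by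
  have hne : m - 1 ≠ 0 := by intro h; linarith [sub_eq_zero.mp h]
  have hinner : ∀ t : ℝ, HasDerivAt (fun u : ℝ => 1 + (m-1)*u) (m-1) t := by
    intro t
    simpa using (((hasDerivAt_id t).const_mul (m-1)).const_add 1)
  have hf : ∀ t : ℝ, 1 + (m-1)*t ≠ 0 →
      HasDerivAt (fun u : ℝ => (1 + (m-1)*u) ^ (1/(m-1))) ((1 + (m-1)*t) ^ (1/(m-1) - 1)) t := by
    intro t hb
    have h := (Real.hasDerivAt_rpow_const (x := 1 + (m-1)*t) (p := 1/(m-1)) (Or.inl hb)).comp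
      t (hinner t)
    exact h.congr_deriv (by
      rw [mul_comm (1/(m-1)), mul_assoc, one_div_mul_cancel hne, mul_one])
  rcases lt_trichotomy s 0 with h | h | h
  · have hb1 : (1:ℝ) ≤ 1 + (m-1)*s := by nlinarith
    have hD : Dpsi m s = (1 + (m-1)*s) ^ (1/(m-1) - 1) := by
      rw [Dpsi, max_eq_left hb1]
      exact min_eq_left (Real.rpow_le_one_of_one_le_of_nonpos hb1
        (by rw [sub_nonpos]; exact le_trans (by apply div_nonpos_of_nonneg_of_nonpos <;> linarith) zero_le_one))
    rw [hD]
    refine (hf s (by linarith)).congr_of_eventuallyEq ?_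
    filter_upwards [Iio_mem_nhds h] with t ht
    rw [psim2, if_pos ht.le]
  · subst h
    have hD : Dpsi m 0 = 1 := by simp [Dpsi, Real.one_rpow]
    rw [hD]
    have hleft : HasDerivWithinAt (psim2 m) 1 (Iic 0) 0 := by
      have h0 := (hf 0 (by norm_num)).hasDerivWithinAt (s := Iic 0)
      have h1 : (1 + (m-1)*(0:ℝ)) ^ (1/(m-1) - 1) = 1 := by
        norm_num
      rw [h1] at h0
      exact h0.congr (fun t ht => by rw [psim2, if_pos (mem_Iic.mp ht)])
        (by rw [psim2, if_pos le_rfl])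
    have hright : HasDerivWithinAt (psim2 m) 1 (Ici 0) 0 := by
      have hbase : HasDerivWithinAt (fun t : ℝ => 1 + t) 1 (Ici 0) 0 := by
        simpa using (((hasDerivAt_id (0:ℝ)).const_add 1)).hasDerivWithinAt (s := Ici 0)
      refine hbase.congr (fun t ht => ?_) ?_
      · rcases eq_or_lt_of_le (mem_Ici.mp ht) with h' | h'
        · rw [psim2, if_pos h'.symm.le, ← h']
          norm_num
        · rw [psim2, if_neg (not_le.mpr h')]
      · rw [psim2, if_pos le_rfl]
        norm_num
    have := hleft.union hright
    rw [Iic_union_Ici] at this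
    exact hasDerivWithinAt_univ.mp this
  · have hD : Dpsi m s = 1 := by
      rw [Dpsi, max_eq_right (by nlinarith), Real.one_rpow, min_self]
    rw [hD]
    refine ((hasDerivAt_id s).const_add 1).congr_of_eventuallyEq ?_
    filter_upwards [Ioi_mem_nhds h] with t ht
    rw [psim2, if_neg (not_le.mpr (mem_Ioi.mp ht))]
    rfl

lemma continuous_sqrt_psim2 (b : ℝ) :
    Continuous fun s : ℝ => Real.sqrt (psim2 m (s + b)) :=
  Real.continuous_sqrt.comp ((continuous_psim2 hm).comp (continuous_id.add continuous_const))

lemma hasDerivAt_thetaFn (b r : ℝ) :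
    HasDerivAt (thetaFn m b) (Real.sqrt (psim2 m (r + b))) r := by
  have hc := continuous_sqrt_psim2 hm b
  exact intervalIntegral.integral_hasDerivAt_right (hc.intervalIntegrable _ _)
    (hc.stronglyMeasurableAtFilter _ _) hc.continuousAt

end deriv

/-- Lower bound for the squared Monge–Kantorovich gradient on the circle
`ℝ/(Lℤ)` (encoded by `L`-periodic functions on `ℝ`):
`∫ |(φ'∘ρ)' − (φ'∘μ)'|² ρ dℓ ≥ ∫ |(θ∘g)'|² dℓ`. -/
theorem stmt10 (L : ℝ) (hL : 0 < L)
    (U : ℝ → ℝ) (hUper : Function.Periodic U L) (hUC2 : ContDiff ℝ 2 U)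
    (hU0 : ∀ x, 0 ≤ U x) (hUnc : ∃ x y, U x ≠ U y)
    (m : ℝ) (hm : m ∈ Ioo (0 : ℝ) (1/2))
    (β : ℝ) (hβ : 0 < β) (cs : ℝ)
    (μ : ℝ → ℝ) (hμdef : μ = fun y => psim2 m (cs - β * U y))
    (hcs : (1/L) * ∫ x in (0:ℝ)..L, μ x = 1)
    (μmin : ℝ) (hμmin : μmin = sInf (Set.range μ))
    -- a positive continuously differentiable probability density `ρ` on the circle
    (ρ : ℝ → ℝ) (hρper : Function.Periodic ρ L) (hρC1 : ContDiff ℝ 1 ρ)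
    (hρpos : ∀ x, 0 < ρ x) (hρ1 : (1/L) * ∫ x in (0:ℝ)..L, ρ x = 1)
    -- `g = φ'(ρ) − φ'(μ)`
    (g : ℝ → ℝ) (hgdef : g = fun y => dphim2 m (ρ y) - dphim2 m (μ y)) :
    (1/L) * ∫ x in (0:ℝ)..L,
        (deriv (fun y => dphim2 m (ρ y)) x - deriv (fun y => dphim2 m (μ y)) x) ^ 2 * ρ x
      ≥ (1/L) * ∫ x in (0:ℝ)..L,
          (deriv (fun y => thetaFn m (dphim2 m μmin) (g y)) x) ^ 2 := by
  have hm1 : m < 1 := lt_trans hm.2 (by norm_num)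
  set b := dphim2 m μmin with hb
  have hUc : Continuous U := hUC2.continuous
  have hμcont : Continuous μ := by
    rw [hμdef]
    exact (continuous_psim2 hm1).comp (continuous_const.sub (continuous_const.mul hUc))
  have hμpos : ∀ x, 0 < μ x := fun x => by rw [hμdef]; exact psim2_pos hm1 _
  have hμper : Function.Periodic μ L := fun x => by rw [hμdef]; simp [hUper x]
  have hcpt : IsCompact (Set.range μ) := by
    rw [← hμper.image_uIcc hL.ne' 0]
    exact isCompact_uIcc.image hμcont
  have hmem : μmin ∈ Set.range μ := by
    rw [hμmin]; exact hcpt.sInf_mem (range_nonempty _)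
  obtain ⟨x0, hx0⟩ := hmem
  have hμminpos : 0 < μmin := hx0 ▸ hμpos x0
  have hbdd : BddBelow (Set.range μ) := ⟨0, by rintro y ⟨x, rfl⟩; exact (hμpos x).le⟩
  have hμmin_le : ∀ x, μmin ≤ μ x := fun x => by
    rw [hμmin]; exact csInf_le hbdd ⟨x, rfl⟩
  -- derivatives
  have hUd : ∀ x, HasDerivAt U (deriv U x) x :=
    fun x => ((hUC2.differentiable (by norm_num)) x).hasDerivAt
  have hρd : ∀ x, HasDerivAt ρ (deriv ρ x) x :=
    fun x => ((hρC1.differentiable (by norm_num)) x).hasDerivAt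
  have hinner : ∀ x, HasDerivAt (fun y => cs - β * U y) (-(β * deriv U x)) x :=
    fun x => ((hUd x).const_mul β).const_sub cs
  have hμd : ∀ x, HasDerivAt μ (Dpsi m (cs - β * U x) * -(β * deriv U x)) x := by
    intro x
    rw [hμdef]
    exact (hasDerivAt_psim2 hm1 _).comp x (hinner x)
  set A : ℝ → ℝ := fun x => Dphi m (ρ x) * deriv ρ x with hAdef
  set B : ℝ → ℝ := fun x => Dphi m (μ x) * (Dpsi m (cs - β * U x) * -(β * deriv U x)) with hBdef
  have hdρ : ∀ x, HasDerivAt (fun y => dphim2 m (ρ y)) (A x) x :=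
    fun x => (hasDerivAt_dphim2 hm1 (hρpos x)).comp x (hρd x)
  have hdμ : ∀ x, HasDerivAt (fun y => dphim2 m (μ y)) (B x) x :=
    fun x => (hasDerivAt_dphim2 hm1 (hμpos x)).comp x (hμd x)
  have hgd : ∀ x, HasDerivAt g (A x - B x) x := fun x => by
    rw [hgdef]; exact (hdρ x).sub (hdμ x)
  have hθd : ∀ x, HasDerivAt (fun y => thetaFn m b (g y))
      (Real.sqrt (psim2 m (g x + b)) * (A x - B x)) x :=
    fun x => (hasDerivAt_thetaFn hm1 b (g x)).comp x (hgd x)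
  -- continuity
  have hDphiρ : Continuous fun x => Dphi m (ρ x) := by
    apply Continuous.max _ continuous_const
    rw [continuous_iff_continuousAt]
    intro x
    exact (Real.continuousAt_rpow_const _ _ (Or.inl (hρpos x).ne')).comp
      hρC1.continuous.continuousAt
  have hDphiμ : Continuous fun x => Dphi m (μ x) := by
    apply Continuous.max _ continuous_const
    rw [continuous_iff_continuousAt]
    intro x
    exact (Real.continuousAt_rpow_const _ _ (Or.inl (hμpos x).ne')).comp
      hμcont.continuousAt
  have hDpsic : Continuous fun x => Dpsi m (cs - β * U x) := by
    have h1 : Continuous (Dpsi m) := by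
      apply Continuous.min _ continuous_const
      exact ((continuous_const.add (continuous_const.mul continuous_id)).max
        continuous_const).rpow_const (fun s => Or.inl (by positivity))
    exact h1.comp (continuous_const.sub (continuous_const.mul hUc))
  have hderivρ : Continuous (deriv ρ) := hρC1.continuous_deriv le_rfl
  have hderivU : Continuous (deriv U) := hUC2.continuous_deriv one_le_two
  have hAc : Continuous A := hDphiρ.mul hderivρ
  have hBc : Continuous B := hDphiμ.mul (hDpsic.mul ((continuous_const.mul hderivU).neg))
  have hgc : Continuous g := by
    rw [continuous_iff_continuousAt]; exact fun x => (hgd x).continuousAt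
  have hsq : Continuous fun x => Real.sqrt (psim2 m (g x + b)) :=
    Real.continuous_sqrt.comp ((continuous_psim2 hm1).comp (hgc.add continuous_const))
  -- rewrite the two integrals
  have hI1 : ∫ x in (0:ℝ)..L,
        (deriv (fun y => dphim2 m (ρ y)) x - deriv (fun y => dphim2 m (μ y)) x) ^ 2 * ρ x
      = ∫ x in (0:ℝ)..L, (A x - B x) ^ 2 * ρ x :=
    intervalIntegral.integral_congr (fun x _ => by rw [(hdρ x).deriv, (hdμ x).deriv])
  have hI2 : ∫ x in (0:ℝ)..L, (deriv (fun y => thetaFn m b (g y)) x) ^ 2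
      = ∫ x in (0:ℝ)..L, (Real.sqrt (psim2 m (g x + b)) * (A x - B x)) ^ 2 :=
    intervalIntegral.integral_congr (fun x _ => by rw [(hθd x).deriv])
  rw [ge_iff_le, hI1, hI2]
  apply mul_le_mul_of_nonneg_left _ (le_of_lt (by positivity : (0:ℝ) < 1/L))
  apply intervalIntegral.integral_mono_on hL.le
  · exact ((hsq.mul (hAc.sub hBc)).pow 2).intervalIntegrable _ _
  · exact (((hAc.sub hBc).pow 2).mul hρC1.continuous).intervalIntegrable _ _
  · intro x _
    have h1 : (Real.sqrt (psim2 m (g x + b)) * (A x - B x)) ^ 2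
        = psim2 m (g x + b) * (A x - B x) ^ 2 := by
      rw [mul_pow, Real.sq_sqrt (psim2_pos hm1 _).le]
    rw [h1]
    have hgx : g x + dphim2 m (μ x) = dphim2 m (ρ x) := by rw [hgdef]; ring
    have hble : b ≤ dphim2 m (μ x) := dphim2_mono hm1 hμminpos (hμmin_le x)
    have h2 : psim2 m (g x + b) ≤ ρ x := by
      calc psim2 m (g x + b) ≤ psim2 m (dphim2 m (ρ x)) :=
            psim2_mono hm1 (by linarith)
        _ = ρ x := psim2_dphim2 hm1 (hρpos x)
    calc psim2 m (g x + b) * (A x - B x) ^ 2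
        ≤ ρ x * (A x - B x) ^ 2 :=
          mul_le_mul_of_nonneg_right h2 (sq_nonneg _)
      _ = (A x - B x) ^ 2 * ρ x := mul_comm _ _
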